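/- Let T > 1, c(T) = cos(π/T), m(T) = 1 − 2/sin²(π/(2T)), and for each N ≥ 1 define the nodes z_n^{(N)} = 2(cos(nπ/(NT)) − c(T))/(1 − c(T)) − 1 for n = 0,…,N. Let μ(z) = T / (π √((1−z)(z−m(T)))) for z ∈ (−1,1). Then ∫_{−1}^{1} μ(z) dz = 1, and for every −1 ≤ α < β ≤ 1, lim_{N→∞} (1/N) · #{ n ∈ {0,…,N} : α ≤ z_n^{(N)} ≤ β } = ∫_{α}^{β} μ(z) dz; i.e., μ is the node density function of these nodes. -/

import Mathlib

open MeasureTheory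

/-- `m(T) = 1 - 2/sin²(π/(2T))`. -/
noncomputable def mTconst (T : ℝ) : ℝ := 1 - 2 / (Real.sin (Real.pi / (2 * T))) ^ 2

/-- The nodes `z_n^{(N)} = 2(cos(nπ/(NT)) - cos(π/T))/(1 - cos(π/T)) - 1`, `n = 0,…,N`. -/
noncomputable def znode (T : ℝ) (N : ℕ) (n : ℕ) : ℝ :=
  2 * (Real.cos ((n : ℝ) * Real.pi / ((N : ℝ) * T)) - Real.cos (Real.pi / T)) /
    (1 - Real.cos (Real.pi / T)) - 1

/-- The node density function `μ(z) = T/(π √((1-z)(z-m(T))))`. -/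
noncomputable def muFE (T : ℝ) (z : ℝ) : ℝ :=
  T / (Real.pi * Real.sqrt ((1 - z) * (z - mTconst T)))

/-!
The nodes are `z_n = m(n/N)` for a map `m` which decreases from `[0,1]` onto `[-1,1]`, with
inverse `x(z) = (T/π) arccos w(z)`, where `w` is the affine map taking `[-1,1]` onto
`[cos(π/T), 1]`. Hence `z_n ∈ [α,β]` iff `n/N ∈ [x(β), x(α)]`, and the proportion of such `n`
tends to `x(α) - x(β)`. On the other hand `μ = -x'`, since
`1 - w(z)² = ((1 - cos(π/T))/2)² (1 - z)(z - m(T))`; as `μ ≥ 0`, the singular integral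
`∫_α^β μ` is then `x(α) - x(β)` by the fundamental theorem of calculus.
-/

open Finset Filter Topology Real

theorem Real.le_cos_iff_le_arccos {w θ : ℝ} (hw : w ≤ 1) (hθ₀ : 0 ≤ θ) (hθ : θ ≤ π) :
    w ≤ cos θ ↔ θ ≤ arccos w := by
  refine ⟨fun h => arccos_cos hθ₀ hθ ▸ arccos_le_arccos h, fun h => ?_⟩
  rcases lt_or_ge w (-1) with hw' | hw'
  · linarith [neg_one_le_cos θ]
  · calc w = cos (arccos w) := (cos_arccos hw' hw).symm
      _ ≤ cos θ := cos_le_cos_of_nonneg_of_le_pi hθ₀ (arccos_le_pi w) h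

theorem Real.cos_le_iff_arccos_le {w θ : ℝ} (hw : -1 ≤ w) (hθ₀ : 0 ≤ θ) (hθ : θ ≤ π) :
    cos θ ≤ w ↔ arccos w ≤ θ := by
  refine ⟨fun h => arccos_cos hθ₀ hθ ▸ arccos_le_arccos h, fun h => ?_⟩
  rcases lt_or_ge 1 w with hw' | hw'
  · linarith [cos_le_one θ]
  · calc cos θ ≤ cos (arccos w) := cos_le_cos_of_nonneg_of_le_pi (arccos_nonneg w) hθ h
      _ = w := cos_arccos hw hw'

theorem filter_range_div_mem_Icc_eq {a b : ℝ} (ha₀ : 0 ≤ a) (ha : a ≤ 1) {N : ℕ} (hN : 0 < N) :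
    (range (N + 1)).filter (fun n : ℕ => b ≤ (n : ℝ) / N ∧ (n : ℝ) / N ≤ a) =
      Icc ⌈b * N⌉₊ ⌊a * N⌋₊ := by
  have hN' : (0 : ℝ) < N := by exact_mod_cast hN
  ext n
  simp only [mem_filter, mem_range, mem_Icc, Nat.ceil_le,
    Nat.le_floor_iff (mul_nonneg ha₀ hN'.le), le_div_iff₀ hN', div_le_iff₀ hN']
  refine ⟨fun h => h.2, fun h => ⟨?_, h⟩⟩
  have : (n : ℝ) ≤ N := h.2.trans (by nlinarith)
  exact Nat.lt_succ_of_le (by exact_mod_cast this)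

theorem tendsto_card_filter_div_mem_Icc {a b : ℝ} (hb : 0 ≤ b) (hba : b ≤ a) (ha : a ≤ 1) :
    Tendsto (fun N : ℕ =>
        (#((range (N + 1)).filter (fun n : ℕ => b ≤ (n : ℝ) / N ∧ (n : ℝ) / N ≤ a)) : ℝ) / N)
      atTop (𝓝 (a - b)) := by
  have hceil : ∀ N : ℕ, ⌈b * N⌉₊ ≤ ⌊a * N⌋₊ + 1 := fun N =>
    (Nat.ceil_le_floor_add_one _).trans (by gcongr)
  have hlim : Tendsto (fun N : ℕ => (⌊a * N⌋₊ : ℝ) / N + 1 / N - (⌈b * N⌉₊ : ℝ) / N)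
      atTop (𝓝 (a + 0 - b)) :=
    (((tendsto_nat_floor_mul_div_atTop (hb.trans hba)).comp tendsto_natCast_atTop_atTop).add
      tendsto_one_div_atTop_nhds_zero_nat).sub
      ((tendsto_nat_ceil_mul_div_atTop hb).comp tendsto_natCast_atTop_atTop)
  rw [add_zero] at hlim
  refine hlim.congr' ?_
  filter_upwards [eventually_gt_atTop 0] with N hN
  rw [filter_range_div_mem_Icc_eq (hb.trans hba) ha hN, Nat.card_Icc, Nat.cast_sub (hceil N)]
  push_cast
  ring

theorem integral_Ioo_eq_sub_of_hasDerivAt_of_nonneg {g g' : ℝ → ℝ} {a b : ℝ} (hab : a ≤ b)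
    (hcont : ContinuousOn g (Set.Icc a b)) (hderiv : ∀ x ∈ Set.Ioo a b, HasDerivAt g (g' x) x)
    (hpos : ∀ x ∈ Set.Ioo a b, 0 ≤ g' x) :
    ∫ x in Set.Ioo a b, g' x = g b - g a := by
  rw [← integral_Ioc_eq_integral_Ioo, ← intervalIntegral.integral_of_le hab]
  exact intervalIntegral.integral_eq_sub_of_hasDerivAt_of_le hab hcont hderiv
    ((intervalIntegrable_iff_integrableOn_Ioc_of_le hab).2
      (intervalIntegral.integrableOn_deriv_of_nonneg hcont hderiv hpos))

/-- The paper's `m(x)`, not to be confused with `m(T) = mTconst T`. -/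
noncomputable def nodeMap (T x : ℝ) : ℝ :=
  2 * (cos (x * π / T) - cos (π / T)) / (1 - cos (π / T)) - 1

/-- `w(z)`: the inverse of the affine part of `nodeMap`. -/
noncomputable def nodeCos (T z : ℝ) : ℝ := (z + 1) * (1 - cos (π / T)) / 2 + cos (π / T)

/-- `x(z)`: the inverse of `nodeMap T` on `[0, 1]`. -/
noncomputable def nodeInv (T z : ℝ) : ℝ := T / π * arccos (nodeCos T z)

theorem znode_eq_nodeMap (T : ℝ) (N n : ℕ) : znode T N n = nodeMap T ((n : ℝ) / N) := by
  rw [znode, nodeMap, div_mul_eq_mul_div, div_div]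

theorem mTconst_eq (T : ℝ) : mTconst T = 1 - 4 / (1 - cos (π / T)) := by
  have hhalf : π / T = 2 * (π / (2 * T)) := by ring
  rw [mTconst, hhalf, cos_two_mul', ← sin_sq_add_cos_sq (π / (2 * T))]
  ring

variable {T : ℝ}

theorem cos_pi_div_lt_one (hT : 1 < T) : cos (π / T) < 1 := by
  have hpos : 0 < π / T := div_pos pi_pos (by linarith)
  have hle : π / T ≤ π := div_le_self pi_pos.le hT.le
  simpa using cos_lt_cos_of_nonneg_of_le_pi le_rfl hle hpos

theorem nodeCos_nodeMap (hT : 1 < T) (x : ℝ) : nodeCos T (nodeMap T x) = cos (x * π / T) := by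
  have := (sub_pos.2 (cos_pi_div_lt_one hT)).ne'
  rw [nodeCos, nodeMap]
  field_simp
  ring

theorem strictMono_nodeCos (hT : 1 < T) : StrictMono (nodeCos T) := fun x y h => by
  have := cos_pi_div_lt_one hT
  unfold nodeCos
  nlinarith

theorem nodeCos_one (T : ℝ) : nodeCos T 1 = 1 := by
  rw [nodeCos]; ring

theorem nodeCos_neg_one (T : ℝ) : nodeCos T (-1) = cos (π / T) := by
  rw [nodeCos]; ring

theorem nodeCos_le_one (hT : 1 < T) {z : ℝ} (hz : z ≤ 1) : nodeCos T z ≤ 1 :=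
  (strictMono_nodeCos hT).monotone hz |>.trans_eq (nodeCos_one T)

theorem neg_one_le_nodeCos (hT : 1 < T) {z : ℝ} (hz : -1 ≤ z) : -1 ≤ nodeCos T z :=
  (neg_one_le_cos _).trans ((nodeCos_neg_one T).symm.trans_le ((strictMono_nodeCos hT).monotone hz))

theorem mTconst_le_neg_one (hT : 1 < T) : mTconst T ≤ -1 := by
  have hc := sub_pos.2 (cos_pi_div_lt_one hT)
  have : 2 ≤ 4 / (1 - cos (π / T)) := by
    rw [le_div_iff₀ hc]
    linarith [neg_one_le_cos (π / T)]
  rw [mTconst_eq]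
  linarith

theorem one_sub_nodeCos_sq (hT : 1 < T) (z : ℝ) :
    1 - nodeCos T z ^ 2 = ((1 - cos (π / T)) / 2) ^ 2 * ((1 - z) * (z - mTconst T)) := by
  have := (sub_pos.2 (cos_pi_div_lt_one hT)).ne'
  rw [mTconst_eq, nodeCos]
  field_simp
  ring

theorem mul_le_nodeInv_iff (hT : 0 < T) {x z : ℝ} :
    x * π / T ≤ arccos (nodeCos T z) ↔ x ≤ nodeInv T z := by
  rw [nodeInv, div_le_iff₀ hT, div_mul_eq_mul_div, le_div_iff₀ pi_pos, mul_comm T]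

theorem nodeInv_le_mul_iff (hT : 0 < T) {x z : ℝ} :
    arccos (nodeCos T z) ≤ x * π / T ↔ nodeInv T z ≤ x := by
  rw [nodeInv, le_div_iff₀ hT, div_mul_eq_mul_div, div_le_iff₀ pi_pos, mul_comm T]

theorem le_nodeMap_iff (hT : 1 < T) {x z : ℝ} (hx₀ : 0 ≤ x) (hx : x ≤ T) (hz : z ≤ 1) :
    z ≤ nodeMap T x ↔ x ≤ nodeInv T z := by
  have hθ₀ : 0 ≤ x * π / T := by positivity
  have hθ : x * π / T ≤ π := by rw [div_le_iff₀ (by linarith)]; nlinarith [pi_pos]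
  rw [← (strictMono_nodeCos hT).le_iff_le, nodeCos_nodeMap hT,
    le_cos_iff_le_arccos (nodeCos_le_one hT hz) hθ₀ hθ, mul_le_nodeInv_iff (by linarith)]

theorem nodeMap_le_iff (hT : 1 < T) {x z : ℝ} (hx₀ : 0 ≤ x) (hx : x ≤ T) (hz : -1 ≤ z) :
    nodeMap T x ≤ z ↔ nodeInv T z ≤ x := by
  have hθ₀ : 0 ≤ x * π / T := by positivity
  have hθ : x * π / T ≤ π := by rw [div_le_iff₀ (by linarith)]; nlinarith [pi_pos]
  rw [← (strictMono_nodeCos hT).le_iff_le, nodeCos_nodeMap hT,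
    cos_le_iff_arccos_le (neg_one_le_nodeCos hT hz) hθ₀ hθ, nodeInv_le_mul_iff (by linarith)]

theorem nodeInv_one (T : ℝ) : nodeInv T 1 = 0 := by
  rw [nodeInv, nodeCos_one, arccos_one, mul_zero]

theorem nodeInv_neg_one (hT : 1 ≤ T) : nodeInv T (-1) = 1 := by
  have hT₀ : 0 < T := by linarith
  rw [nodeInv, nodeCos_neg_one, arccos_cos (by positivity) (div_le_self pi_pos.le hT)]
  field_simp

theorem nodeInv_nonneg (hT : 0 ≤ T) (z : ℝ) : 0 ≤ nodeInv T z :=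
  mul_nonneg (div_nonneg hT pi_pos.le) (arccos_nonneg _)

theorem nodeInv_antitone (hT : 1 < T) : Antitone (nodeInv T) := fun _ _ h =>
  mul_le_mul_of_nonneg_left (arccos_le_arccos ((strictMono_nodeCos hT).monotone h))
    (div_nonneg (by linarith) pi_pos.le)

theorem nodeInv_le_one (hT : 1 < T) {z : ℝ} (hz : -1 ≤ z) : nodeInv T z ≤ 1 :=
  (nodeInv_antitone hT hz).trans (nodeInv_neg_one hT.le).le

theorem continuous_nodeInv (T : ℝ) : Continuous (nodeInv T) := by
  unfold nodeInv nodeCos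
  fun_prop

theorem hasDerivAt_nodeInv (hT : 1 < T) {z : ℝ} (hz : z ∈ Set.Ioo (-1) 1) :
    HasDerivAt (nodeInv T) (-muFE T z) z := by
  obtain ⟨hz₁, hz₂⟩ := hz
  set c := cos (π / T)
  have hc : 0 < 1 - c := sub_pos.2 (cos_pi_div_lt_one hT)
  have hm := mTconst_le_neg_one hT
  have hcos : HasDerivAt (nodeCos T) ((1 - c) / 2) z := by
    have := ((((hasDerivAt_id z).add_const 1).mul_const (1 - c)).div_const 2).add_const c
    rwa [one_mul] at this
  have hw₁ : nodeCos T z ≠ -1 := by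
    have := (nodeCos_neg_one T).symm.trans_lt (strictMono_nodeCos hT hz₁)
    linarith [neg_one_le_cos (π / T)]
  have hw₂ : nodeCos T z ≠ 1 := ((strictMono_nodeCos hT hz₂).trans_eq (nodeCos_one T)).ne
  have hsqrt : √(1 - nodeCos T z ^ 2) = (1 - c) / 2 * √((1 - z) * (z - mTconst T)) := by
    rw [one_sub_nodeCos_sq hT, sqrt_mul (by positivity), sqrt_sq (by positivity)]
  have hpos : 0 < √((1 - z) * (z - mTconst T)) := sqrt_pos.2 (by nlinarith)
  refine (((hasDerivAt_arccos hw₁ hw₂).comp z hcos).const_mul (T / π)).congr_deriv ?_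
  rw [hsqrt, muFE]
  field_simp

theorem muFE_nonneg (hT : 0 ≤ T) (z : ℝ) : 0 ≤ muFE T z := by
  unfold muFE
  positivity

theorem integral_muFE (hT : 1 < T) {a b : ℝ} (ha : -1 ≤ a) (hab : a ≤ b) (hb : b ≤ 1) :
    ∫ z in Set.Ioo a b, muFE T z = nodeInv T a - nodeInv T b := by
  rw [integral_Ioo_eq_sub_of_hasDerivAt_of_nonneg (g := -nodeInv T) hab
    (continuous_nodeInv T).neg.continuousOn
    (fun z hz => neg_neg (muFE T z) ▸
      (hasDerivAt_nodeInv hT ⟨by linarith [hz.1], by linarith [hz.2]⟩).neg)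
    (fun z _ => muFE_nonneg (by linarith) z), Pi.neg_apply, Pi.neg_apply, neg_sub_neg]

/-- `μ` integrates to `1` on `(-1,1)`, and for every `-1 ≤ α < β ≤ 1` the proportion of the
nodes `z_n^{(N)}`, `n = 0,…,N`, lying in `[α,β]` tends to `∫_α^β μ(z) dz` as `N → ∞`:
`μ` is the node density function of these nodes. -/
theorem stmt_15 (T : ℝ) (hT : 1 < T) :
    (∫ z in Set.Ioo (-1 : ℝ) 1, muFE T z) = 1 ∧
    ∀ α β : ℝ, -1 ≤ α → α < β → β ≤ 1 →
      Filter.Tendsto (fun N : ℕ =>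
          (((Finset.range (N + 1)).filter
            (fun n => α ≤ znode T N n ∧ znode T N n ≤ β)).card : ℝ) / (N : ℝ))
        Filter.atTop (nhds (∫ z in Set.Ioo α β, muFE T z)) := by
  refine ⟨by rw [integral_muFE hT le_rfl (by norm_num) le_rfl,
    nodeInv_neg_one hT.le, nodeInv_one, sub_zero], fun α β hα hαβ hβ => ?_⟩
  rw [integral_muFE hT hα hαβ.le hβ]
  refine (tendsto_card_filter_div_mem_Icc (nodeInv_nonneg (by linarith) β)
    (nodeInv_antitone hT hαβ.le) (nodeInv_le_one hT hα)).congr fun N => ?_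
  congr 3
  refine filter_congr fun n hn => ?_
  have hx₀ : (0 : ℝ) ≤ n / N := by positivity
  have hx : (n : ℝ) / N ≤ T :=
    (div_le_one_of_le₀ (by exact_mod_cast mem_range_succ_iff.1 hn) N.cast_nonneg).trans hT.le
  rw [znode_eq_nodeMap, le_nodeMap_iff hT hx₀ hx (hαβ.le.trans hβ),
    nodeMap_le_iff hT hx₀ hx (hα.trans hαβ.le), and_comm]
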